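/- arXiv:1111.6952 — 4 statements merged into one kernel-verified Lean document; each statement's English description precedes it below -/
import Mathlib

section
/- Let p_n, q_n : Ω → ℝ be measurable exponents with uniform bounds 1 < c ≤ p_n(x), q_n(x) ≤ C, with ‖p_n − p‖_{L^∞(Ω)} → 0 and ‖q_n − q‖_{L^∞(Ω)} → 0, and assume moreover that p_n ≥ p and q_n ≤ q pointwise on Ω. Then S(p_n(·),q_n(·),Ω) → S(p(·),q(·),Ω). -/
open MeasureTheory Metric Set Filter Topology

noncomputable section

abbrev EN (N : ℕ) : Type := EuclideanSpace ℝ (Fin N)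

/-- Luxemburg norm of `u` on `U` w.r.t. the measure `m` and variable exponent `r`. -/
noncomputable def luxNormM {N : ℕ} (m : Measure (EN N)) (U : Set (EN N))
    (r u : EN N → ℝ) : ℝ :=
  sInf {l : ℝ | 0 < l ∧ (∫ x in U, (|u x| / l) ^ (r x) ∂m) ≤ 1}

/-- Luxemburg norm w.r.t. Lebesgue measure. -/
noncomputable def luxNorm {N : ℕ} (U : Set (EN N)) (r u : EN N → ℝ) : ℝ :=
  luxNormM volume U r u

/-- `v` is a `C_c^∞` test function on `U`. -/
def TestFn {N : ℕ} (U : Set (EN N)) (v : EN N → ℝ) : Prop :=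
  ContDiff ℝ (⊤ : ℕ∞) v ∧ HasCompactSupport v ∧ tsupport v ⊆ U

/-- Pointwise length of the gradient of `v`. -/
noncomputable def grad {N : ℕ} (v : EN N → ℝ) (x : EN N) : ℝ := ‖fderiv ℝ v x‖

/-- The variable exponent Sobolev constant `S(p(·),q(·),U)`. -/
noncomputable def sobolevConst {N : ℕ} (p q : EN N → ℝ) (U : Set (EN N)) : ℝ :=
  sInf {c : ℝ | ∃ v : EN N → ℝ, TestFn U v ∧ v ≠ 0 ∧
    c = luxNorm U p (grad v) / luxNorm U q v}

/-- The critical Sobolev exponent of the value `pval` in dimension `N`. -/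
noncomputable def pstar (N : ℕ) (pval : ℝ) : ℝ := N * pval / (N - pval)

/-- `K_r⁻¹`, the best constant in the classical Sobolev inequality. -/
noncomputable def Kinv (N : ℕ) (r : ℝ) : ℝ :=
  sobolevConst (fun _ => r) (fun _ => pstar N r) (univ : Set (EN N))

/-- The localized Sobolev constant `S̄_x`. -/
noncomputable def SbarAt {N : ℕ} (p q : EN N → ℝ) (x : EN N) : ℝ :=
  sSup {s : ℝ | ∃ ε : ℝ, 0 < ε ∧ s = sobolevConst p q (ball x ε)}

/-- The critical set `A`. -/
def critSet {N : ℕ} (p q : EN N → ℝ) (Ω : Set (EN N)) : Set (EN N) :=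
  {x | x ∈ Ω ∧ p x < N ∧ q x = pstar N (p x)}

/-- The critical constant `S̄ = inf_{x ∈ A} S̄_x`. -/
noncomputable def SbarCrit {N : ℕ} (p q : EN N → ℝ) (Ω : Set (EN N)) : ℝ :=
  sInf (SbarAt p q '' critSet p q Ω)

/-- A modulus of continuity `ρ` with `ρ(t) log(1/t) → 0` as `t → 0+`. -/
def Modulus (ρ : ℝ → ℝ) : Prop :=
  Tendsto (fun t => ρ t * Real.log (1 / t)) (nhdsWithin 0 (Set.Ioi 0)) (nhds 0)

/-- `f` has modulus of continuity `ρ` on `Ω`. -/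
def HasModulusOn {N : ℕ} (f : EN N → ℝ) (ρ : ℝ → ℝ) (Ω : Set (EN N)) : Prop :=
  ∀ x ∈ Ω, ∀ y ∈ Ω, |f x - f y| ≤ ρ (dist x y)

/-!
For exponents `r ≤ s ≤ r + ε` on `Ω` (all in `[c, C]`), Luxemburg norms compare in two ways.
Uniformly in `u`, the pointwise bound `t ^ r ≤ δ ^ (-ε) * t ^ s + δ ^ c` (`0 < δ ≤ 1`) integrates to
`‖u‖_r ≤ (δ ^ (-ε) + |Ω| δ ^ c) ^ (1 / c) ‖u‖_s`, and choosing first `δ` and then `ε` small makes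
this factor as close to `1` as we like. For a fixed `u` with `|u| ≤ M`, conversely,
`‖u‖_s ≤ max 1 (M / l) ^ (ε / c) * l` for every `l` admissible for `r`.

Since `pₙ ≥ p` and `qₙ ≤ q`, the uniform comparison bounds `‖∇v‖_p` by `‖∇v‖_{pₙ}` and `‖v‖_{qₙ}`
by `‖v‖_q` for all test functions `v` at once, so `S(p, q) ≤ K² S(pₙ, qₙ)` eventually for every
`K > 1`. For a single near-optimal `v` the two comparisons together show that both Luxemburg norms
converge, so `lim sup S(pₙ, qₙ) ≤ S(p, q)`.
-/

section

open Real

variable {N : ℕ} {Ω : Set (EN N)} {r s u : EN N → ℝ} {a b c C M ε l : ℝ}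

-- `luxNorm U r u` unfolds to `sInf {l | 0 < l ∧ luxModular U r u l ≤ 1}`.
def luxModular (U : Set (EN N)) (r u : EN N → ℝ) (l : ℝ) : ℝ :=
  ∫ x in U, (|u x| / l) ^ (r x)

lemma luxNorm_nonneg (U : Set (EN N)) (r u : EN N → ℝ) : 0 ≤ luxNorm U r u :=
  Real.sInf_nonneg fun _ hl => hl.1.le

lemma luxNorm_le (hl : 0 < l) (h : luxModular Ω r u l ≤ 1) : luxNorm Ω r u ≤ l :=
  csInf_le ⟨0, fun _ hl => hl.1.le⟩ ⟨hl, h⟩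

lemma integrableOn_abs_div_rpow (hΩ : MeasurableSet Ω) (hΩfin : volume Ω ≠ ⊤)
    (hr : Measurable r) (hrb : MapsTo r Ω (Icc c C)) (hc : 0 ≤ c)
    (hu : Measurable u) (hM : ∀ x, |u x| ≤ M) (hl : 0 ≤ l) :
    IntegrableOn (fun x => (|u x| / l) ^ (r x)) Ω := by
  refine Measure.integrableOn_of_bounded (M := max 1 (M / l) ^ C) hΩfin
    ((hu.abs.div_const l).pow hr).aestronglyMeasurable (ae_restrict_of_forall_mem hΩ ?_)
  intro x hx
  have hbase : |u x| / l ≤ max 1 (M / l) := le_max_of_le_right (by gcongr; exact hM x)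
  rw [norm_of_nonneg (by positivity)]
  calc (|u x| / l) ^ r x ≤ max 1 (M / l) ^ r x :=
        rpow_le_rpow (by positivity) hbase (hc.trans (hrb hx).1)
    _ ≤ max 1 (M / l) ^ C := rpow_le_rpow_of_exponent_le (le_max_left _ _) (hrb hx).2

lemma exists_luxModular_le_one (hΩ : MeasurableSet Ω) (hΩfin : volume Ω ≠ ⊤)
    (hr : Measurable r) (hrb : MapsTo r Ω (Icc c C)) (hc : 0 < c)
    (hu : Measurable u) (hM : ∀ x, |u x| ≤ M) :
    ∃ l, 0 < l ∧ luxModular Ω r u l ≤ 1 := by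
  set m := (volume Ω).toReal
  have hM0 : 0 ≤ M := (abs_nonneg _).trans (hM 0)
  set z := (m + 1) ^ (1 / c)
  have hz : 1 ≤ z := one_le_rpow (by simp [m]) (by positivity)
  refine ⟨(M + 1) * z, by positivity, ?_⟩
  have hpt : ∀ x ∈ Ω, (|u x| / ((M + 1) * z)) ^ r x ≤ (m + 1)⁻¹ := by
    intro x hx
    have hbase : |u x| / ((M + 1) * z) ≤ z⁻¹ := by
      rw [div_le_iff₀ (by positivity), inv_mul_eq_div, mul_div_cancel_right₀ _ (by positivity)]
      linarith [hM x]
    calc (|u x| / ((M + 1) * z)) ^ r x ≤ z⁻¹ ^ r x :=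
          rpow_le_rpow (by positivity) hbase (hc.le.trans (hrb hx).1)
      _ ≤ z⁻¹ ^ c := rpow_le_rpow_of_exponent_ge (by positivity) (inv_le_one_of_one_le₀ hz)
          (hrb hx).1
      _ = (m + 1)⁻¹ := by
          rw [inv_rpow (by positivity), ← rpow_mul (by positivity), one_div_mul_cancel hc.ne',
            rpow_one]
  calc luxModular Ω r u ((M + 1) * z) ≤ ∫ _ in Ω, (m + 1)⁻¹ :=
        setIntegral_mono_on (integrableOn_abs_div_rpow hΩ hΩfin hr hrb hc.le hu hM (by positivity))
          (integrableOn_const hΩfin) hΩ hpt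
    _ = m / (m + 1) := by rw [setIntegral_const, smul_eq_mul, measureReal_def, div_eq_mul_inv]
    _ ≤ 1 := div_le_one_of_le₀ (by linarith) (by positivity)

lemma le_luxNorm (hΩ : MeasurableSet Ω) (hΩfin : volume Ω ≠ ⊤)
    (hr : Measurable r) (hrb : MapsTo r Ω (Icc c C)) (hc : 0 < c)
    (hu : Measurable u) (hM : ∀ x, |u x| ≤ M)
    (h : ∀ l, 0 < l → luxModular Ω r u l ≤ 1 → a ≤ l) : a ≤ luxNorm Ω r u := by
  obtain ⟨l, hl⟩ := exists_luxModular_le_one hΩ hΩfin hr hrb hc hu hM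
  exact le_csInf ⟨l, hl⟩ fun l hl => h l hl.1 hl.2

lemma exists_luxModular_le_one_lt (hΩ : MeasurableSet Ω) (hΩfin : volume Ω ≠ ⊤)
    (hr : Measurable r) (hrb : MapsTo r Ω (Icc c C)) (hc : 0 < c)
    (hu : Measurable u) (hM : ∀ x, |u x| ≤ M) (hb : luxNorm Ω r u < b) :
    ∃ l, 0 < l ∧ luxModular Ω r u l ≤ 1 ∧ l < b := by
  obtain ⟨l, hl⟩ := exists_luxModular_le_one hΩ hΩfin hr hrb hc hu hM
  obtain ⟨l, ⟨hl0, hl1⟩, hlb⟩ := exists_lt_of_csInf_lt ⟨l, hl⟩ hb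
  exact ⟨l, hl0, hl1, hlb⟩

lemma rpow_le_mul_rpow_add_rpow {t p q δ : ℝ} (ht : 0 ≤ t) (hc : 0 < c) (hcp : c ≤ p)
    (hpq : p ≤ q) (hqp : q ≤ p + ε) (hδ : 0 < δ) (hδ1 : δ ≤ 1) :
    t ^ p ≤ δ ^ (-ε) * t ^ q + δ ^ c := by
  rcases le_or_gt t δ with htδ | hδt
  · calc t ^ p ≤ δ ^ p := rpow_le_rpow ht htδ (hc.le.trans hcp)
      _ ≤ δ ^ c := rpow_le_rpow_of_exponent_ge hδ hδ1 hcp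
      _ ≤ δ ^ (-ε) * t ^ q + δ ^ c := le_add_of_nonneg_left (by positivity)
  · have ht0 : 0 < t := hδ.trans hδt
    calc t ^ p = t ^ (p - q) * t ^ q := by rw [← rpow_add ht0, sub_add_cancel]
      _ ≤ δ ^ (-ε) * t ^ q := by
          refine mul_le_mul_of_nonneg_right ?_ (by positivity)
          calc t ^ (p - q) ≤ δ ^ (p - q) := rpow_le_rpow_of_nonpos hδ hδt.le (by linarith)
            _ ≤ δ ^ (-ε) := rpow_le_rpow_of_exponent_ge hδ hδ1 (by linarith)
      _ ≤ δ ^ (-ε) * t ^ q + δ ^ c := le_add_of_nonneg_right (by positivity)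

lemma div_rpow_le_rpow {t T p q : ℝ} (ht : 0 ≤ t) (htT : t ≤ T) (hT : 1 ≤ T) (hc : 0 < c)
    (hcp : c ≤ p) (hpq : p ≤ q) (hqp : q ≤ p + ε) (hε : 0 ≤ ε) :
    (t / T ^ (ε / c)) ^ q ≤ t ^ p := by
  have hβ : 1 ≤ T ^ (ε / c) := one_le_rpow hT (div_nonneg hε hc.le)
  rcases le_or_gt t 1 with ht1 | ht1
  · calc (t / T ^ (ε / c)) ^ q ≤ t ^ q :=
          rpow_le_rpow (by positivity) (div_le_self ht hβ) (by linarith)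
      _ ≤ t ^ p := rpow_le_rpow_of_exponent_ge' ht ht1 (by linarith) hpq
  · -- `T ^ (ε / c)` raised to `q ≥ c` beats the extra factor `t ^ ε ≤ T ^ ε`
    have hTε : T ^ ε ≤ (T ^ (ε / c)) ^ q := by
      rw [← rpow_mul (by linarith)]
      refine rpow_le_rpow_of_exponent_le hT ?_
      rw [div_mul_eq_mul_div, le_div_iff₀ hc]
      nlinarith
    calc (t / T ^ (ε / c)) ^ q = t ^ q / (T ^ (ε / c)) ^ q := div_rpow ht (by positivity) q
      _ ≤ t ^ p * t ^ ε / T ^ ε := by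
          rw [← rpow_add (by linarith)]
          gcongr
          exact ht1.le
      _ ≤ t ^ p * T ^ ε / T ^ ε := by gcongr
      _ = t ^ p := by field_simp

lemma exists_gt_lt_of_continuousAt {f : ℝ → ℝ} {x₀ y : ℝ} (hf : ContinuousAt f x₀)
    (h : f x₀ < y) : ∃ x > x₀, f x < y := by
  obtain ⟨x, hxy, hx⟩ := (((hf.eventually_lt continuousAt_const h).filter_mono
    nhdsWithin_le_nhds).and (self_mem_nhdsWithin (s := Ioi x₀))).exists
  exact ⟨x, hx, hxy⟩

lemma luxNorm_le_mul_luxNorm (hΩ : MeasurableSet Ω) (hΩfin : volume Ω ≠ ⊤) (hc : 0 < c)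
    (hr : Measurable r) (hrb : MapsTo r Ω (Icc c C))
    (hs : Measurable s) (hsb : MapsTo s Ω (Icc c C)) (hε : 0 ≤ ε)
    (hrs : ∀ x ∈ Ω, r x ≤ s x ∧ s x ≤ r x + ε) (hu : Measurable u) (hM : ∀ x, |u x| ≤ M)
    {δ : ℝ} (hδ : 0 < δ) (hδ1 : δ ≤ 1) :
    luxNorm Ω r u ≤ (δ ^ (-ε) + (volume Ω).toReal * δ ^ c) ^ (1 / c) * luxNorm Ω s u := by
  set m := (volume Ω).toReal
  set B := δ ^ (-ε) + m * δ ^ c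
  have hB : 1 ≤ B := le_add_of_le_of_nonneg
    (one_le_rpow_of_pos_of_le_one_of_nonpos hδ hδ1 (neg_nonpos.mpr hε)) (by positivity)
  have hB0 : 0 < B := one_pos.trans_le hB
  have hK : 0 < B ^ (1 / c) := rpow_pos_of_pos hB0 _
  -- if `l` is admissible for `s`, then `B ^ (1 / c) * l` is admissible for `r`
  rw [← div_le_iff₀' hK]
  refine le_luxNorm hΩ hΩfin hs hsb hc hu hM fun l hl hmod => ?_
  rw [div_le_iff₀' hK]
  refine luxNorm_le (by positivity) ?_
  have hpt : ∀ x ∈ Ω, (|u x| / (B ^ (1 / c) * l)) ^ r x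
      ≤ B⁻¹ * (δ ^ (-ε) * (|u x| / l) ^ s x + δ ^ c) := by
    intro x hx
    have hcr : c ≤ r x := (hrb hx).1
    calc (|u x| / (B ^ (1 / c) * l)) ^ r x = (|u x| / l) ^ r x / B ^ (r x / c) := by
          rw [mul_comm, ← div_div, div_rpow (by positivity) hK.le, ← rpow_mul hB0.le,
            one_div_mul_eq_div]
      _ ≤ (|u x| / l) ^ r x / B := by
          gcongr
          exact self_le_rpow_of_one_le hB ((one_le_div hc).mpr hcr)
      _ ≤ B⁻¹ * (δ ^ (-ε) * (|u x| / l) ^ s x + δ ^ c) := by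
          rw [div_eq_inv_mul]
          gcongr
          exact rpow_le_mul_rpow_add_rpow (by positivity) hc hcr (hrs x hx).1 (hrs x hx).2 hδ hδ1
  have hint_s := integrableOn_abs_div_rpow hΩ hΩfin hs hsb hc.le hu hM hl.le
  calc luxModular Ω r u (B ^ (1 / c) * l)
      ≤ ∫ x in Ω, B⁻¹ * (δ ^ (-ε) * (|u x| / l) ^ s x + δ ^ c) :=
        setIntegral_mono_on (integrableOn_abs_div_rpow hΩ hΩfin hr hrb hc.le hu hM
          (by positivity)) (((hint_s.const_mul _).add (integrableOn_const hΩfin)).const_mul _)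
          hΩ hpt
    _ = B⁻¹ * (δ ^ (-ε) * luxModular Ω s u l + m * δ ^ c) := by
        rw [integral_const_mul, integral_add (hint_s.const_mul _) (integrableOn_const hΩfin),
          integral_const_mul, setIntegral_const, smul_eq_mul, measureReal_def, luxModular]
    _ ≤ B⁻¹ * (δ ^ (-ε) * 1 + m * δ ^ c) := by gcongr
    _ = 1 := by rw [mul_one, inv_mul_cancel₀ hB0.ne']

lemma exists_rpow_add_mul_rpow_lt {m K : ℝ} (hm : 0 ≤ m) (hc : 0 < c) (hK : 1 < K) :
    ∃ δ ε : ℝ, 0 < δ ∧ δ ≤ 1 ∧ 0 < ε ∧ (δ ^ (-ε) + m * δ ^ c) ^ (1 / c) < K := by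
  have hcont₁ : ContinuousAt (fun δ : ℝ => (1 + m * δ ^ c) ^ (1 / c)) 0 := by
    fun_prop (disch := first | positivity | (left; positivity) | right; positivity)
  obtain ⟨δ, hδK, hδ, hδ1⟩ := (((hcont₁.eventually_lt continuousAt_const
    (by simpa [zero_rpow hc.ne'] using hK)).filter_mono nhdsWithin_le_nhds).and
    (Ioc_mem_nhdsGT one_pos)).exists
  have hcont₂ : ContinuousAt (fun ε : ℝ => (δ ^ (-ε) + m * δ ^ c) ^ (1 / c)) 0 := by
    fun_prop (disch := first | positivity | (left; positivity) | right; positivity)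
  obtain ⟨ε, hε, hεK⟩ := exists_gt_lt_of_continuousAt hcont₂ (by simpa using hδK)
  exact ⟨δ, ε, hδ, hδ1, hε, hεK⟩

lemma luxNorm_le_rpow_mul_of_luxModular_le (hΩ : MeasurableSet Ω) (hΩfin : volume Ω ≠ ⊤)
    (hc : 0 < c) (hr : Measurable r) (hrb : MapsTo r Ω (Icc c C))
    (hs : Measurable s) (hsb : MapsTo s Ω (Icc c C)) (hε : 0 ≤ ε)
    (hrs : ∀ x ∈ Ω, r x ≤ s x ∧ s x ≤ r x + ε) (hu : Measurable u) (hM : ∀ x, |u x| ≤ M)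
    (hl : 0 < l) (hmod : luxModular Ω r u l ≤ 1) :
    luxNorm Ω s u ≤ max 1 (M / l) ^ (ε / c) * l := by
  set T := max 1 (M / l)
  have hT : 1 ≤ T := le_max_left _ _
  refine luxNorm_le (by positivity) (le_trans ?_ hmod)
  refine setIntegral_mono_on (integrableOn_abs_div_rpow hΩ hΩfin hs hsb hc.le hu hM
    (by positivity)) (integrableOn_abs_div_rpow hΩ hΩfin hr hrb hc.le hu hM hl.le) hΩ
    fun x hx => ?_
  rw [mul_comm, ← div_div]
  exact div_rpow_le_rpow (by positivity) (le_max_of_le_right (by gcongr; exact hM x)) hT hc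
    (hrb hx).1 (hrs x hx).1 (hrs x hx).2 hε

lemma luxNorm_le_rpow_mul_luxNorm (hΩ : MeasurableSet Ω) (hΩfin : volume Ω ≠ ⊤)
    (hc : 0 < c) (hr : Measurable r) (hrb : MapsTo r Ω (Icc c C))
    (hs : Measurable s) (hsb : MapsTo s Ω (Icc c C)) (hε : 0 ≤ ε)
    (hrs : ∀ x ∈ Ω, r x ≤ s x ∧ s x ≤ r x + ε) (hu : Measurable u) (hM : ∀ x, |u x| ≤ M)
    {l₀ : ℝ} (hl₀ : 0 < l₀) (hl₀r : l₀ ≤ luxNorm Ω r u) :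
    luxNorm Ω s u ≤ max 1 (M / l₀) ^ (ε / c) * luxNorm Ω r u := by
  have hβ : 0 < max 1 (M / l₀) ^ (ε / c) := rpow_pos_of_pos (by positivity) _
  rw [← div_le_iff₀' hβ]
  refine le_luxNorm hΩ hΩfin hr hrb hc hu hM fun l hl hmod => ?_
  have hl₀l : l₀ ≤ l := hl₀r.trans (luxNorm_le hl hmod)
  rw [div_le_iff₀' hβ]
  calc luxNorm Ω s u ≤ max 1 (M / l) ^ (ε / c) * l :=
        luxNorm_le_rpow_mul_of_luxModular_le hΩ hΩfin hc hr hrb hs hsb hε hrs hu hM hl hmod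
    _ ≤ max 1 (M / l₀) ^ (ε / c) * l := by
        gcongr
        exact (abs_nonneg _).trans (hM 0)

lemma mul_min_rpow_le_luxNorm (hΩ : MeasurableSet Ω) (hΩfin : volume Ω ≠ ⊤) (hc : 0 < c)
    (hr : Measurable r) (hrb : MapsTo r Ω (Icc c C)) (hu : Measurable u) (hM : ∀ x, |u x| ≤ M)
    {b : Set (EN N)} (hbΩ : b ⊆ Ω) (hb : MeasurableSet b) (hb0 : 0 < (volume b).toReal)
    {δ : ℝ} (hδ : 0 ≤ δ) (hδu : ∀ x ∈ b, δ ≤ |u x|) :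
    δ * min 1 (volume b).toReal ^ (1 / c) ≤ luxNorm Ω r u := by
  set μ := (volume b).toReal
  set z := min 1 μ
  have hz0 : 0 < z := lt_min one_pos hb0
  refine le_luxNorm hΩ hΩfin hr hrb hc hu hM fun l hl hmod => ?_
  rcases le_or_gt δ l with hδl | hlδ
  · calc δ * z ^ (1 / c) ≤ δ * 1 := by
          gcongr
          exact rpow_le_one hz0.le (min_le_left _ _) (by positivity)
      _ ≤ l := by linarith
  have hone : 1 ≤ δ / l := (one_le_div hl).mpr hlδ.le
  have hint := integrableOn_abs_div_rpow hΩ hΩfin hr hrb hc.le hu hM hl.le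
  have hμ : μ * (δ / l) ^ c ≤ 1 :=
    calc μ * (δ / l) ^ c = ∫ _ in b, (δ / l) ^ c := by
          rw [setIntegral_const, smul_eq_mul, measureReal_def]
      _ ≤ ∫ x in b, (|u x| / l) ^ r x := by
          refine setIntegral_mono_on
            (integrableOn_const ((measure_mono hbΩ).trans_lt hΩfin.lt_top).ne)
            (hint.mono_set hbΩ) hb fun x hx => ?_
          calc (δ / l) ^ c ≤ (δ / l) ^ r x := rpow_le_rpow_of_exponent_le hone (hrb (hbΩ hx)).1
            _ ≤ (|u x| / l) ^ r x := by
                gcongr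
                exacts [hc.le.trans (hrb (hbΩ hx)).1, hδu x hx]
      _ ≤ luxModular Ω r u l :=
          setIntegral_mono_set hint (.of_forall fun x => by positivity) hbΩ.eventuallyLE
      _ ≤ 1 := hmod
  have hδlz : (δ / l) ^ c ≤ z⁻¹ := by
    rw [le_inv_comm₀ (by positivity) hz0]
    calc z ≤ μ := min_le_right _ _
      _ ≤ ((δ / l) ^ c)⁻¹ := by rw [← one_div]; exact (le_div_iff₀ (by positivity)).mpr hμ
  rwa [← le_rpow_inv_iff_of_pos (by positivity) (by positivity) hc, inv_rpow hz0.le,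
    div_le_iff₀ hl, inv_mul_eq_div, le_div_iff₀ (by positivity), ← one_div] at hδlz

lemma TendstoUniformlyOn.eventually_le_add {ι α : Type*} {F : ι → α → ℝ} {f : α → ℝ}
    {L : Filter ι} {S : Set α} (h : TendstoUniformlyOn F f L S) (hε : 0 < ε) :
    ∀ᶠ n in L, ∀ x ∈ S, F n x ≤ f x + ε ∧ f x ≤ F n x + ε :=
  (Metric.tendstoUniformlyOn_iff.mp h ε hε).mono fun n hn x hx => by
    have := abs_lt.mp (Real.dist_eq (f x) (F n x) ▸ hn x hx)
    constructor <;> linarith [this.1, this.2]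

section Sequences

variable {ι : Type*} {L : Filter ι}

lemma eventually_luxNorm_le_mul {rn sn : ι → EN N → ℝ} {K : ℝ}
    (hΩ : MeasurableSet Ω) (hΩfin : volume Ω ≠ ⊤) (hc : 0 < c)
    (hrn : ∀ n, Measurable (rn n)) (hrnb : ∀ n, MapsTo (rn n) Ω (Icc c C))
    (hsn : ∀ n, Measurable (sn n)) (hsnb : ∀ n, MapsTo (sn n) Ω (Icc c C))
    (hrs : ∀ n, ∀ x ∈ Ω, rn n x ≤ sn n x)
    (hclose : ∀ ε > 0, ∀ᶠ n in L, ∀ x ∈ Ω, sn n x ≤ rn n x + ε) (hK : 1 < K) :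
    ∀ᶠ n in L, ∀ (u : EN N → ℝ) (M : ℝ), Measurable u → (∀ x, |u x| ≤ M) →
      luxNorm Ω (rn n) u ≤ K * luxNorm Ω (sn n) u := by
  obtain ⟨δ, ε, hδ, hδ1, hε, hδεK⟩ := exists_rpow_add_mul_rpow_lt ENNReal.toReal_nonneg hc hK
  filter_upwards [hclose ε hε] with n hn u M hu hM
  calc luxNorm Ω (rn n) u
      ≤ (δ ^ (-ε) + (volume Ω).toReal * δ ^ c) ^ (1 / c) * luxNorm Ω (sn n) u :=
        luxNorm_le_mul_luxNorm hΩ hΩfin hc (hrn n) (hrnb n) (hsn n) (hsnb n) hε.le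
          (fun x hx => ⟨hrs n x hx, hn x hx⟩) hu hM hδ hδ1
    _ ≤ K * luxNorm Ω (sn n) u := by gcongr; exact luxNorm_nonneg _ _ _

variable {sn : ι → EN N → ℝ}

lemma tendsto_luxNorm_of_tendstoUniformlyOn_of_le (hΩ : MeasurableSet Ω)
    (hΩfin : volume Ω ≠ ⊤) (hc : 0 < c) (hr : Measurable r) (hrb : MapsTo r Ω (Icc c C))
    (hsn : ∀ n, Measurable (sn n)) (hsnb : ∀ n, MapsTo (sn n) Ω (Icc c C))
    (hconv : TendstoUniformlyOn sn r L Ω) (hle : ∀ n, ∀ x ∈ Ω, r x ≤ sn n x)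
    (hu : Measurable u) (hM : ∀ x, |u x| ≤ M) :
    Tendsto (fun n => luxNorm Ω (sn n) u) L (𝓝 (luxNorm Ω r u)) := by
  refine tendsto_order.2 ⟨fun a ha => ?_, fun b hb => ?_⟩
  · obtain ⟨K, hK, haK⟩ := exists_gt_lt_of_continuousAt (continuous_const_mul a).continuousAt
      (by rwa [mul_one])
    filter_upwards [eventually_luxNorm_le_mul hΩ hΩfin hc (fun _ => hr) (fun _ => hrb) hsn hsnb
      hle (fun ε hε => (hconv.eventually_le_add hε).mono fun n h x hx => (h x hx).1) hK]
      with n hn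
    exact lt_of_mul_lt_mul_left ((haK.trans_le (hn u M hu hM)).trans_eq' (mul_comm _ _))
      (by positivity)
  · obtain ⟨l, hl, hmod, hlb⟩ := exists_luxModular_le_one_lt hΩ hΩfin hr hrb hc hu hM hb
    obtain ⟨ε, hε, hεb⟩ := exists_gt_lt_of_continuousAt
      (x₀ := 0) (f := fun ε => max 1 (M / l) ^ (ε / c) * l) (by fun_prop (disch := positivity))
      (by simpa using hlb)
    filter_upwards [hconv.eventually_le_add hε] with n hn
    exact (luxNorm_le_rpow_mul_of_luxModular_le hΩ hΩfin hc hr hrb (hsn n) (hsnb n) hε.le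
      (fun x hx => ⟨hle n x hx, (hn x hx).1⟩) hu hM hl hmod).trans_lt hεb

lemma tendsto_luxNorm_of_tendstoUniformlyOn_of_ge (hΩ : MeasurableSet Ω)
    (hΩfin : volume Ω ≠ ⊤) (hc : 0 < c) (hr : Measurable r) (hrb : MapsTo r Ω (Icc c C))
    (hsn : ∀ n, Measurable (sn n)) (hsnb : ∀ n, MapsTo (sn n) Ω (Icc c C))
    (hconv : TendstoUniformlyOn sn r L Ω) (hge : ∀ n, ∀ x ∈ Ω, sn n x ≤ r x)
    (hu : Measurable u) (hM : ∀ x, |u x| ≤ M) {l₀ : ℝ} (hl₀ : 0 < l₀)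
    (hl₀sn : ∀ n, l₀ ≤ luxNorm Ω (sn n) u) :
    Tendsto (fun n => luxNorm Ω (sn n) u) L (𝓝 (luxNorm Ω r u)) := by
  refine tendsto_order.2 ⟨fun a ha => ?_, fun b hb => ?_⟩
  · obtain ⟨ε, hε, haε⟩ := exists_gt_lt_of_continuousAt
      (x₀ := 0) (f := fun ε => max 1 (M / l₀) ^ (ε / c) * a) (by fun_prop (disch := positivity))
      (by simpa using ha)
    filter_upwards [hconv.eventually_le_add hε] with n hn
    have := luxNorm_le_rpow_mul_luxNorm hΩ hΩfin hc (hsn n) (hsnb n) hr hrb hε.le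
      (fun x hx => ⟨hge n x hx, (hn x hx).2⟩) hu hM hl₀ (hl₀sn n)
    exact lt_of_mul_lt_mul_left (haε.trans_le this) (rpow_nonneg (by positivity) _)
  · obtain ⟨K, hK, hKb⟩ := exists_gt_lt_of_continuousAt
      (continuous_mul_const (luxNorm Ω r u)).continuousAt (by rwa [one_mul])
    filter_upwards [eventually_luxNorm_le_mul hΩ hΩfin hc hsn hsnb (fun _ => hr) (fun _ => hrb)
      hge (fun ε hε => (hconv.eventually_le_add hε).mono fun n h x hx => (h x hx).2) hK]
      with n hn
    exact (hn u M hu hM).trans_lt hKb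

end Sequences

section TestFunctions

variable {U : Set (EN N)} {v : EN N → ℝ}

lemma TestFn.continuous (hv : TestFn U v) : Continuous v :=
  hv.1.continuous

lemma TestFn.continuous_grad (hv : TestFn U v) : Continuous (grad v) :=
  (hv.1.continuous_fderiv (by simp)).norm

lemma TestFn.exists_abs_le (hv : TestFn U v) : ∃ M, ∀ x, |v x| ≤ M :=
  hv.2.1.exists_bound_of_continuous hv.continuous

lemma TestFn.exists_abs_grad_le (hv : TestFn U v) : ∃ M, ∀ x, |grad v x| ≤ M :=
  (hv.2.1.fderiv (𝕜 := ℝ)).norm.exists_bound_of_continuous hv.continuous_grad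

lemma TestFn.exists_mem_ne_zero (hv : TestFn U v) (hv0 : v ≠ 0) : ∃ x ∈ U, v x ≠ 0 := by
  obtain ⟨x, hx⟩ := Function.ne_iff.mp hv0
  exact ⟨x, hv.2.2 (subset_tsupport _ hx), hx⟩

lemma exists_testFn_ne_zero (hU : IsOpen U) (hne : U.Nonempty) : ∃ v, TestFn U v ∧ v ≠ 0 := by
  obtain ⟨x₀, hx₀⟩ := hne
  obtain ⟨ρ, hρ, hball⟩ := Metric.isOpen_iff.mp hU x₀ hx₀
  let f : ContDiffBump x₀ := ⟨ρ / 4, ρ / 2, by positivity, by linarith⟩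
  refine ⟨f, ⟨f.contDiff, f.hasCompactSupport, ?_⟩, fun h => ?_⟩
  · rw [f.tsupport_eq]
    exact (closedBall_subset_ball (by simp [f]; linarith)).trans hball
  · simpa [f.one_of_mem_closedBall (mem_closedBall_self f.rIn_pos.le)] using congr_fun h x₀

lemma TestFn.exists_pos_le_luxNorm (hv : TestFn Ω v) (hv0 : v ≠ 0) (hΩo : IsOpen Ω)
    (hΩfin : volume Ω ≠ ⊤) (hc : 0 < c) :
    ∃ l₀ > 0, ∀ r, Measurable r → MapsTo r Ω (Icc c C) → l₀ ≤ luxNorm Ω r v := by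
  obtain ⟨x₀, hx₀, hvx₀⟩ := hv.exists_mem_ne_zero hv0
  obtain ⟨M, hM⟩ := hv.exists_abs_le
  set δ := |v x₀| / 2
  have hδ : 0 < δ := by positivity
  set b := Ω ∩ {x | δ < |v x|}
  have hbo : IsOpen b := hΩo.inter (isOpen_lt continuous_const hv.continuous.abs)
  have hb0 : 0 < (volume b).toReal := ENNReal.toReal_pos
    (hbo.measure_pos volume ⟨x₀, hx₀, half_lt_self (abs_pos.mpr hvx₀)⟩).ne'
    ((measure_mono inter_subset_left).trans_lt hΩfin.lt_top).ne
  refine ⟨δ * min 1 (volume b).toReal ^ (1 / c), by positivity, fun r hr hrb => ?_⟩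
  exact mul_min_rpow_le_luxNorm hΩo.measurableSet hΩfin hc hr hrb hv.continuous.measurable hM
    inter_subset_left hbo.measurableSet hb0 hδ.le fun x hx => hx.2.le

end TestFunctions

section SobolevConstant

variable {U : Set (EN N)} {p q v : EN N → ℝ}

lemma sobolevConst_le (hv : TestFn U v) (hv0 : v ≠ 0) :
    sobolevConst p q U ≤ luxNorm U p (grad v) / luxNorm U q v :=
  csInf_le ⟨0, by rintro _ ⟨v, -, -, rfl⟩; exact div_nonneg (luxNorm_nonneg ..) (luxNorm_nonneg ..)⟩
    ⟨v, hv, hv0, rfl⟩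

lemma le_sobolevConst (hU : IsOpen U) (hne : U.Nonempty)
    (h : ∀ v, TestFn U v → v ≠ 0 → a ≤ luxNorm U p (grad v) / luxNorm U q v) :
    a ≤ sobolevConst p q U := by
  obtain ⟨v, hv, hv0⟩ := exists_testFn_ne_zero hU hne
  exact le_csInf ⟨_, v, hv, hv0, rfl⟩ (by rintro _ ⟨v, hv, hv0, rfl⟩; exact h v hv hv0)

lemma exists_testFn_lt_of_sobolevConst_lt (hU : IsOpen U) (hne : U.Nonempty)
    (h : sobolevConst p q U < b) :
    ∃ v, TestFn U v ∧ v ≠ 0 ∧ luxNorm U p (grad v) / luxNorm U q v < b := by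
  obtain ⟨v, hv, hv0⟩ := exists_testFn_ne_zero hU hne
  obtain ⟨_, ⟨v, hv, hv0, rfl⟩, hlt⟩ := exists_lt_of_csInf_lt (by exact ⟨_, v, hv, hv0, rfl⟩) h
  exact ⟨v, hv, hv0, hlt⟩

variable {ι : Type*} {L : Filter ι} {pn qn : ι → EN N → ℝ}

lemma eventually_sobolevConst_le_mul (hΩo : IsOpen Ω) (hΩne : Ω.Nonempty)
    (hΩfin : volume Ω ≠ ⊤) (hc : 0 < c)
    (hp : Measurable p) (hpb : MapsTo p Ω (Icc c C)) (hq : Measurable q)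
    (hqb : MapsTo q Ω (Icc c C)) (hpn : ∀ n, Measurable (pn n))
    (hpnb : ∀ n, MapsTo (pn n) Ω (Icc c C)) (hqn : ∀ n, Measurable (qn n))
    (hqnb : ∀ n, MapsTo (qn n) Ω (Icc c C))
    (hpconv : TendstoUniformlyOn pn p L Ω) (hqconv : TendstoUniformlyOn qn q L Ω)
    (hpmono : ∀ n, ∀ x ∈ Ω, p x ≤ pn n x) (hqmono : ∀ n, ∀ x ∈ Ω, qn n x ≤ q x)
    {K : ℝ} (hK : 1 < K) :
    ∀ᶠ n in L, sobolevConst p q Ω ≤ K * K * sobolevConst (pn n) (qn n) Ω := by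
  have hΩ := hΩo.measurableSet
  have hK0 : 0 < K := one_pos.trans hK
  filter_upwards [eventually_luxNorm_le_mul hΩ hΩfin hc (fun _ => hp) (fun _ => hpb) hpn hpnb
      hpmono (fun ε hε => (hpconv.eventually_le_add hε).mono fun n h x hx => (h x hx).1) hK,
    eventually_luxNorm_le_mul hΩ hΩfin hc hqn hqnb (fun _ => hq) (fun _ => hqb)
      hqmono (fun ε hε => (hqconv.eventually_le_add hε).mono fun n h x hx => (h x hx).2) hK]
    with n hpn' hqn'
  rw [← div_le_iff₀' (by positivity)]
  refine le_sobolevConst hΩo hΩne fun v hv hv0 => ?_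
  obtain ⟨Mg, hMg⟩ := hv.exists_abs_grad_le
  obtain ⟨Mv, hMv⟩ := hv.exists_abs_le
  obtain ⟨l₀, hl₀, hl₀v⟩ := hv.exists_pos_le_luxNorm hv0 hΩo hΩfin hc (C := C)
  have hqnv : 0 < luxNorm Ω (qn n) v := hl₀.trans_le (hl₀v _ (hqn n) (hqnb n))
  rw [div_le_iff₀' (by positivity)]
  calc sobolevConst p q Ω ≤ luxNorm Ω p (grad v) / luxNorm Ω q v := sobolevConst_le hv hv0
    _ ≤ K * luxNorm Ω (pn n) (grad v) / (luxNorm Ω (qn n) v / K) :=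
        div_le_div₀ (mul_nonneg hK0.le (luxNorm_nonneg ..))
          (hpn' _ _ hv.continuous_grad.measurable hMg)
          (by positivity) ((div_le_iff₀' hK0).mpr (hqn' _ _ hv.continuous.measurable hMv))
    _ = K * K * (luxNorm Ω (pn n) (grad v) / luxNorm Ω (qn n) v) := by field_simp

lemma TestFn.tendsto_luxNorm_grad_div_luxNorm (hv : TestFn Ω v) (hv0 : v ≠ 0)
    (hΩo : IsOpen Ω) (hΩfin : volume Ω ≠ ⊤) (hc : 0 < c)
    (hp : Measurable p) (hpb : MapsTo p Ω (Icc c C)) (hq : Measurable q)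
    (hqb : MapsTo q Ω (Icc c C)) (hpn : ∀ n, Measurable (pn n))
    (hpnb : ∀ n, MapsTo (pn n) Ω (Icc c C)) (hqn : ∀ n, Measurable (qn n))
    (hqnb : ∀ n, MapsTo (qn n) Ω (Icc c C))
    (hpconv : TendstoUniformlyOn pn p L Ω) (hqconv : TendstoUniformlyOn qn q L Ω)
    (hpmono : ∀ n, ∀ x ∈ Ω, p x ≤ pn n x) (hqmono : ∀ n, ∀ x ∈ Ω, qn n x ≤ q x) :
    Tendsto (fun n => luxNorm Ω (pn n) (grad v) / luxNorm Ω (qn n) v) L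
      (𝓝 (luxNorm Ω p (grad v) / luxNorm Ω q v)) := by
  have hΩ := hΩo.measurableSet
  obtain ⟨Mg, hMg⟩ := hv.exists_abs_grad_le
  obtain ⟨Mv, hMv⟩ := hv.exists_abs_le
  obtain ⟨l₀, hl₀, hl₀v⟩ := hv.exists_pos_le_luxNorm hv0 hΩo hΩfin hc (C := C)
  exact (tendsto_luxNorm_of_tendstoUniformlyOn_of_le hΩ hΩfin hc hp hpb hpn hpnb hpconv hpmono
    hv.continuous_grad.measurable hMg).div
    (tendsto_luxNorm_of_tendstoUniformlyOn_of_ge hΩ hΩfin hc hq hqb hqn hqnb hqconv hqmono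
      hv.continuous.measurable hMv hl₀ fun n => hl₀v _ (hqn n) (hqnb n))
    (hl₀.trans_le (hl₀v q hq hqb)).ne'

end SobolevConstant

end

theorem stmt5_general {N : ℕ} (Ω : Set (EN N)) (hΩo : IsOpen Ω)
    (hΩne : Ω.Nonempty) (hΩb : Bornology.IsBounded Ω)
    (p q : EN N → ℝ) (pn qn : ℕ → EN N → ℝ)
    (hpm : Measurable p) (hqm : Measurable q)
    (hpnm : ∀ n, Measurable (pn n)) (hqnm : ∀ n, Measurable (qn n))
    (c C : ℝ) (hc : 1 < c)
    (hpb : ∀ x ∈ Ω, c ≤ p x ∧ p x ≤ C)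
    (hqb : ∀ x ∈ Ω, c ≤ q x ∧ q x ≤ C)
    (hbn : ∀ n, ∀ x ∈ Ω, c ≤ pn n x ∧ pn n x ≤ C ∧ c ≤ qn n x ∧ qn n x ≤ C)
    (hp : TendstoUniformlyOn (fun n x => pn n x) p atTop Ω)
    (hq : TendstoUniformlyOn (fun n x => qn n x) q atTop Ω)
    (hpmono : ∀ n, ∀ x ∈ Ω, p x ≤ pn n x)
    (hqmono : ∀ n, ∀ x ∈ Ω, qn n x ≤ q x) :
    Tendsto (fun n => sobolevConst (pn n) (qn n) Ω) atTop (nhds (sobolevConst p q Ω)) := by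
  have hΩfin : volume Ω ≠ ⊤ := hΩb.measure_lt_top.ne
  have hc₀ : 0 < c := one_pos.trans hc
  have hpnb : ∀ n, MapsTo (pn n) Ω (Icc c C) := fun n x hx => ⟨(hbn n x hx).1, (hbn n x hx).2.1⟩
  have hqnb : ∀ n, MapsTo (qn n) Ω (Icc c C) := fun n x hx => (hbn n x hx).2.2
  refine tendsto_order.2 ⟨fun a ha => ?_, fun b hb => ?_⟩
  · obtain ⟨K, hK, haK⟩ := exists_gt_lt_of_continuousAt (x₀ := 1) (f := fun K => K * K * a)
      (by fun_prop) (by simpa using ha)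
    filter_upwards [eventually_sobolevConst_le_mul hΩo hΩne hΩfin hc₀ hpm (fun x hx => hpb x hx)
      hqm (fun x hx => hqb x hx) hpnm hpnb hqnm hqnb hp hq hpmono hqmono hK] with n hn
    exact lt_of_mul_lt_mul_left (haK.trans_le hn) (by positivity)
  · obtain ⟨v, hv, hv0, hvb⟩ := exists_testFn_lt_of_sobolevConst_lt hΩo hΩne hb
    filter_upwards [(hv.tendsto_luxNorm_grad_div_luxNorm hv0 hΩo hΩfin hc₀ hpm
      (fun x hx => hpb x hx) hqm (fun x hx => hqb x hx) hpnm hpnb hqnm hqnb hp hq hpmono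
      hqmono).eventually_lt_const hvb] with n hn
    exact (sobolevConst_le hv hv0).trans_lt hn

/-- continuity of the Sobolev constant for monotone uniform convergence of
the exponents. -/
theorem stmt5 {N : ℕ} (hN : 2 ≤ N) (Ω : Set (EN N)) (hΩo : IsOpen Ω)
    (hΩne : Ω.Nonempty) (hΩb : Bornology.IsBounded Ω)
    (p q : EN N → ℝ) (pn qn : ℕ → EN N → ℝ)
    (hpm : Measurable p) (hqm : Measurable q)
    (hpnm : ∀ n, Measurable (pn n)) (hqnm : ∀ n, Measurable (qn n))
    (c C : ℝ) (hc : 1 < c)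
    (hpb : ∀ x ∈ Ω, c ≤ p x ∧ p x ≤ C)
    (hqb : ∀ x ∈ Ω, c ≤ q x ∧ q x ≤ C)
    (hbn : ∀ n, ∀ x ∈ Ω, c ≤ pn n x ∧ pn n x ≤ C ∧ c ≤ qn n x ∧ qn n x ≤ C)
    (hp : TendstoUniformlyOn (fun n x => pn n x) p atTop Ω)
    (hq : TendstoUniformlyOn (fun n x => qn n x) q atTop Ω)
    (hpmono : ∀ n, ∀ x ∈ Ω, p x ≤ pn n x)
    (hqmono : ∀ n, ∀ x ∈ Ω, qn n x ≤ q x) :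
    Tendsto (fun n => sobolevConst (pn n) (qn n) Ω) atTop (nhds (sobolevConst p q Ω)) :=
  stmt5_general Ω hΩo hΩne hΩb p q pn qn hpm hqm hpnm hqnm c C hc hpb hqb hbn hp hq hpmono hqmono
end
end

section
/- Let p_n : Ω → ℝ be measurable exponents with p ≤ p_n ≤ C pointwise on Ω for all n and ‖p_n − p‖_{L^∞(Ω)} → 0. Then for every δ > 0 there exists n₀ such that for all n ≥ n₀ and ALL u ∈ C_c^∞(Ω) simultaneously: ‖|∇u|‖_{L^{p(·)}(Ω)} ≤ (1+δ)·‖|∇u|‖_{L^{p_n(·)}(Ω)} (the error is uniform in u). -/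
open MeasureTheory Metric Set Filter Topology

noncomputable section

/-!
Fix `K > 1` and a threshold `θ ∈ (0, 1]`. For `t ≥ 0` and exponents `c ≤ p ≤ q ≤ p + ε`,
either `t ≤ θ` and `t ^ p ≤ θ ^ c`, or `t > θ` and `t ^ p ≤ θ ^ (-ε) t ^ q`. For
`t = |u| / (K l)` moreover `t ^ q ≤ K ^ (-c) (|u| / l) ^ q`, so integrating over `U` bounds the
`p`-modular of `u / (K l)` by `θ ^ c |U| + θ ^ (-ε) K ^ (-c) ρ`, where `ρ` is the `q`-modular of
`u / l`. Since `K ^ (-c) < 1`, choosing first `θ` and then `ε` small makes this at most `1`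
whenever `ρ ≤ 1`, so `‖u‖_{p(·)} ≤ K ‖u‖_{q(·)}` for every bounded `u` as soon as
`p ≤ q ≤ p + ε`, with `ε` depending only on `K`, `c` and `|U|`.
-/

open Real

lemma rpow_le_rpow_add_rpow_neg_mul {t θ ε c p q : ℝ} (ht : 0 ≤ t) (hθ0 : 0 < θ) (hθ1 : θ ≤ 1)
    (hc : 0 ≤ c) (hcp : c ≤ p) (hpq : p ≤ q) (hqp : q ≤ p + ε) :
    t ^ p ≤ θ ^ c + θ ^ (-ε) * t ^ q := by
  rcases le_or_gt t θ with h | h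
  · calc t ^ p ≤ θ ^ p := rpow_le_rpow ht h (hc.trans hcp)
      _ ≤ θ ^ c := rpow_le_rpow_of_exponent_ge hθ0 hθ1 hcp
      _ ≤ _ := le_add_of_nonneg_right (by positivity)
  · have ht0 : 0 < t := hθ0.trans h
    calc t ^ p = t ^ (p - q) * t ^ q := by rw [← rpow_add ht0, sub_add_cancel]
      _ ≤ θ ^ (p - q) * t ^ q := by
          gcongr ?_ * _
          exact rpow_le_rpow_of_nonpos hθ0 h.le (by linarith)
      _ ≤ θ ^ (-ε) * t ^ q := by
          gcongr ?_ * _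
          exact rpow_le_rpow_of_exponent_ge hθ0 hθ1 (by linarith)
      _ ≤ _ := le_add_of_nonneg_left (by positivity)

lemma div_rpow_le_rpow_neg_mul {s K c q : ℝ} (hs : 0 ≤ s) (hK : 1 ≤ K) (hcq : c ≤ q) :
    (s / K) ^ q ≤ K ^ (-c) * s ^ q := by
  rw [div_rpow hs (by linarith), div_eq_mul_inv, mul_comm, ← rpow_neg (by linarith)]
  gcongr

lemma exists_rpow_mul_add_rpow_neg_mul_le_one {c V a : ℝ} (hc : 0 < c) (ha : a < 1) :
    ∃ θ ε : ℝ, 0 < θ ∧ θ ≤ 1 ∧ 0 < ε ∧ θ ^ c * V + θ ^ (-ε) * a ≤ 1 := by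
  have hθ : Tendsto (fun θ : ℝ => θ ^ c * V + a) (𝓝[>] 0) (𝓝 (0 ^ c * V + a)) :=
    ((((continuous_rpow_const hc.le).tendsto 0).mul_const V).add_const a).mono_left
      nhdsWithin_le_nhds
  rw [zero_rpow hc.ne', zero_mul, zero_add] at hθ
  obtain ⟨θ, hθV, hθ0, hθ1⟩ :=
    ((hθ.eventually (gt_mem_nhds ha)).and (Ioc_mem_nhdsGT one_pos)).exists
  have hε : Tendsto (fun ε : ℝ => θ ^ c * V + θ ^ (-ε) * a) (𝓝[>] 0)
      (𝓝 (θ ^ c * V + θ ^ (-0 : ℝ) * a)) :=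
    ((((continuousAt_const_rpow hθ0.ne').comp continuous_neg.continuousAt).tendsto.mul_const
      a).const_add _).mono_left nhdsWithin_le_nhds
  rw [neg_zero, rpow_zero, one_mul] at hε
  obtain ⟨ε, hεθ, hε0⟩ :=
    ((hε.eventually (gt_mem_nhds hθV)).and self_mem_nhdsWithin).exists
  exact ⟨θ, ε, hθ0, hθ1, hε0, hεθ.le⟩

section Luxemburg

variable {N : ℕ} {m : Measure (EN N)} {U : Set (EN N)}

lemma luxNormM_le_mul_of_modular_le_one {p q u : EN N → ℝ} {k : ℝ} (hk : 0 < k)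
    (hne : ∃ l > 0, ∫ x in U, (|u x| / l) ^ q x ∂m ≤ 1)
    (h : ∀ l > 0, ∫ x in U, (|u x| / l) ^ q x ∂m ≤ 1 →
      ∫ x in U, (|u x| / (k * l)) ^ p x ∂m ≤ 1) :
    luxNormM m U p u ≤ k * luxNormM m U q u := by
  rw [luxNormM, luxNormM, ← div_le_iff₀' hk]
  refine le_csInf hne ?_
  rintro l ⟨hl, hlq⟩
  rw [div_le_iff₀' hk]
  exact csInf_le ⟨0, fun _ h => h.1.le⟩ ⟨by positivity, h l hl hlq⟩

lemma exists_modular_le_one {q u : EN N → ℝ} {M : ℝ} (hU : MeasurableSet U) (hmU : m U ≠ ⊤)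
    (hu : ∀ x, |u x| ≤ M) (hq : ∀ x ∈ U, 1 ≤ q x) :
    ∃ l > 0, ∫ x in U, (|u x| / l) ^ q x ∂m ≤ 1 := by
  have hM : 0 ≤ M := (abs_nonneg _).trans (hu 0)
  set V := m.real U
  have hV : 0 ≤ V := measureReal_nonneg
  set l := (V + 1) * (M + 1)
  have hl : 0 < l := by positivity
  have hbound : ∀ x ∈ U, (|u x| / l) ^ q x ≤ M / l := fun x hx =>
    (rpow_le_self_of_le_one (by positivity)
        ((div_le_one hl).2 ((hu x).trans (by nlinarith))) (hq x hx)).trans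
      (div_le_div_of_nonneg_right (hu x) hl.le)
  refine ⟨l, hl, ?_⟩
  calc ∫ x in U, (|u x| / l) ^ q x ∂m ≤ ∫ _ in U, M / l ∂m :=
        integral_mono_of_nonneg (ae_of_all _ fun x => by positivity) (integrableOn_const hmU)
          (ae_restrict_of_forall_mem hU hbound)
    _ = V * (M / l) := by rw [setIntegral_const, smul_eq_mul]
    _ ≤ 1 := by rw [mul_div_assoc', div_le_one hl]; nlinarith

lemma integrableOn_modular {r u : EN N → ℝ} {M C l : ℝ} (hU : MeasurableSet U) (hmU : m U ≠ ⊤)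
    (hu : Measurable u) (huM : ∀ x, |u x| ≤ M) (hr : Measurable r)
    (hrC : ∀ x ∈ U, 0 ≤ r x ∧ r x ≤ C) (hl : 0 < l) :
    IntegrableOn (fun x => (|u x| / l) ^ r x) U m := by
  refine Integrable.mono' (integrableOn_const (C := max 1 (M / l) ^ C) hmU)
    ((hu.abs.div_const l).pow hr).aestronglyMeasurable
    (ae_restrict_of_forall_mem hU fun x hx => ?_)
  rw [Real.norm_of_nonneg (by positivity)]
  calc (|u x| / l) ^ r x ≤ max 1 (M / l) ^ r x :=
        rpow_le_rpow (by positivity)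
          ((div_le_div_of_nonneg_right (huM x) hl.le).trans (le_max_right _ _)) (hrC x hx).1
    _ ≤ max 1 (M / l) ^ C := rpow_le_rpow_of_exponent_le (le_max_left _ _) (hrC x hx).2

theorem exists_luxNormM_le_mul_of_exponent_close (hU : MeasurableSet U) (hmU : m U ≠ ⊤)
    {c K : ℝ} (hc : 1 ≤ c) (hK : 1 < K) :
    ∃ ε > 0, ∀ (p q u : EN N → ℝ) (M C : ℝ), Measurable u → Measurable q →
      (∀ x, |u x| ≤ M) → (∀ x ∈ U, c ≤ p x ∧ p x ≤ q x ∧ q x ≤ p x + ε ∧ q x ≤ C) →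
      luxNormM m U p u ≤ K * luxNormM m U q u := by
  have ha : K ^ (-c) < 1 := rpow_lt_one_of_one_lt_of_neg hK (by linarith)
  obtain ⟨θ, ε, hθ0, hθ1, hε, hθε⟩ :=
    exists_rpow_mul_add_rpow_neg_mul_le_one (V := m.real U) (by linarith : (0 : ℝ) < c) ha
  refine ⟨ε, hε, fun p q u M C hu hq huM hpq => ?_⟩
  refine luxNormM_le_mul_of_modular_le_one (by linarith)
    (exists_modular_le_one hU hmU huM fun x hx => hc.trans ((hpq x hx).1.trans (hpq x hx).2.1))
    fun l hl hlq => ?_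
  have hint : IntegrableOn (fun x => (|u x| / l) ^ q x) U m :=
    integrableOn_modular hU hmU hu huM hq
      (fun x hx => ⟨by linarith [hpq x hx], (hpq x hx).2.2.2⟩) hl
  have hconst : IntegrableOn (fun _ => θ ^ c) U m := integrableOn_const hmU
  have hpt : ∀ x ∈ U,
      (|u x| / (K * l)) ^ p x ≤ θ ^ c + θ ^ (-ε) * K ^ (-c) * (|u x| / l) ^ q x := by
    intro x hx
    obtain ⟨hcp, hpq, hqp, -⟩ := hpq x hx
    rw [mul_comm K, ← div_div, mul_assoc]
    calc (|u x| / l / K) ^ p x ≤ θ ^ c + θ ^ (-ε) * (|u x| / l / K) ^ q x :=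
          rpow_le_rpow_add_rpow_neg_mul (by positivity) hθ0 hθ1 (by linarith) hcp hpq hqp
      _ ≤ _ := by
          gcongr
          exact div_rpow_le_rpow_neg_mul (by positivity) hK.le (hcp.trans hpq)
  calc ∫ x in U, (|u x| / (K * l)) ^ p x ∂m
      ≤ ∫ x in U, (θ ^ c + θ ^ (-ε) * K ^ (-c) * (|u x| / l) ^ q x) ∂m :=
        integral_mono_of_nonneg (ae_of_all _ fun x => by positivity)
          (hconst.add (hint.const_mul _)) (ae_restrict_of_forall_mem hU hpt)
    _ = θ ^ c * m.real U + θ ^ (-ε) * K ^ (-c) * ∫ x in U, (|u x| / l) ^ q x ∂m := by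
        rw [integral_add hconst (hint.const_mul _), setIntegral_const,
          smul_eq_mul, integral_const_mul, mul_comm (m.real U)]
    _ ≤ θ ^ c * m.real U + θ ^ (-ε) * K ^ (-c) * 1 := by gcongr
    _ ≤ 1 := by linarith

end Luxemburg

theorem stmt6_general {N : ℕ} (Ω : Set (EN N)) (hΩo : IsOpen Ω)
    (hΩb : Bornology.IsBounded Ω)
    (p : EN N → ℝ) (pn : ℕ → EN N → ℝ)
    (hpnm : ∀ n, Measurable (pn n))
    (c C : ℝ) (hc : 1 < c)
    (hpb : ∀ x ∈ Ω, c ≤ p x ∧ p x ≤ C)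
    (hbn : ∀ n, ∀ x ∈ Ω, p x ≤ pn n x ∧ pn n x ≤ C)
    (hp : TendstoUniformlyOn (fun n x => pn n x) p atTop Ω) :
    ∀ δ : ℝ, 0 < δ → ∃ n₀ : ℕ, ∀ n ≥ n₀, ∀ u : EN N → ℝ, TestFn Ω u →
      luxNorm Ω p (grad u) ≤ (1 + δ) * luxNorm Ω (pn n) (grad u) := by
  intro δ hδ
  obtain ⟨ε, hε, hclose⟩ := exists_luxNormM_le_mul_of_exponent_close (m := volume)
    hΩo.measurableSet hΩb.measure_lt_top.ne hc.le (by linarith : 1 < 1 + δ)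
  obtain ⟨n₀, hn₀⟩ := eventually_atTop.mp (Metric.tendstoUniformlyOn_iff.mp hp ε hε)
  refine ⟨n₀, fun n hn u hu => ?_⟩
  obtain ⟨hu, hus, -⟩ := hu
  have hgrad : Continuous (grad u) := (hu.continuous_fderiv (by simp)).norm
  obtain ⟨M, hM⟩ := (hus.fderiv ℝ).norm.exists_bound_of_continuous hgrad
  refine hclose p (pn n) (grad u) M C hgrad.measurable (hpnm n) hM fun x hx => ?_
  have hpx := abs_lt.mp (Real.dist_eq _ _ ▸ hn₀ n hn x hx)
  exact ⟨(hpb x hx).1, (hbn n x hx).1, by linarith [hpx.1], (hbn n x hx).2⟩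

/-- uniform (in `u`) lower estimate of the gradient norms for exponents
`p_n ≥ p` converging uniformly to `p`. -/
theorem stmt6 {N : ℕ} (hN : 2 ≤ N) (Ω : Set (EN N)) (hΩo : IsOpen Ω)
    (hΩne : Ω.Nonempty) (hΩb : Bornology.IsBounded Ω)
    (p : EN N → ℝ) (pn : ℕ → EN N → ℝ)
    (hpm : Measurable p) (hpnm : ∀ n, Measurable (pn n))
    (c C : ℝ) (hc : 1 < c)
    (hpb : ∀ x ∈ Ω, c ≤ p x ∧ p x ≤ C)
    (hbn : ∀ n, ∀ x ∈ Ω, p x ≤ pn n x ∧ pn n x ≤ C)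
    (hp : TendstoUniformlyOn (fun n x => pn n x) p atTop Ω) :
    ∀ δ : ℝ, 0 < δ → ∃ n₀ : ℕ, ∀ n ≥ n₀, ∀ u : EN N → ℝ, TestFn Ω u →
      luxNorm Ω p (grad u) ≤ (1 + δ) * luxNorm Ω (pn n) (grad u) :=
  stmt6_general Ω hΩo hΩb p pn hpnm c C hc hpb hbn hp
end
end

section
/- Assume 0 ∈ Ω, 1 < p(0) < N and q(0) = p* where p* := N·p(0)/(N − p(0)). For ε > 0 set q_ε(x) := q(εx) and, for u ∈ C_c^∞(B_ε(0)), set u_ε(x) := u(εx) ∈ C_c^∞(B_1(0)). Then for every δ > 0 there exists ε₀ > 0 such that for all 0 < ε < ε₀ and ALL nonzero u ∈ C_c^∞(B_ε(0)) simultaneously: (1−δ)·ε^{N/p*}·‖u_ε‖_{L^{q_ε(·)}(B_1(0))} ≤ ‖u‖_{L^{q(·)}(B_ε(0))} ≤ (1+δ)·ε^{N/p*}·‖u_ε‖_{L^{q_ε(·)}(B_1(0))}. -/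
open MeasureTheory Metric Set Filter Topology

noncomputable section

/-!
Substituting `x = ε y` turns the modular of `u` on `B_ε` into the modular of
`ε ^ (N / q (ε y)) u (ε y)` on `B_1`. Since `|q (ε y) - q 0| ≤ ρ (ε ‖y‖)`, the logarithm of the
weight differs from `log (ε ^ (N / q 0))` by at most `N ρ(t) log (1 / t)` with `t = ε ‖y‖ ≤ ε`,
so `ρ(t) log (1/t) → 0` puts the weight within a factor `1 ± δ` of `ε ^ (N / p*)` uniformly in
`y` for small `ε`. Monotonicity and positive homogeneity of the Luxemburg norm conclude.
-/

open Real
open scoped Pointwise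

section Exponent

lemma Modulus.exists_pos_forall_mul_lt {ρ : ℝ → ℝ} (hρ : Modulus ρ) (K : ℝ) {θ : ℝ}
    (hθ : 0 < θ) : ∃ t₀ > 0, ∀ t, 0 < t → t < t₀ → K * (ρ t * log (1 / t)) < θ := by
  have hK : Tendsto (fun t => K * (ρ t * log (1 / t))) (𝓝[>] 0) (𝓝 0) := by
    simpa using hρ.const_mul K
  obtain ⟨t₀, ht₀, hsub⟩ := mem_nhdsGT_iff_exists_Ioo_subset.mp (hK.eventually (gt_mem_nhds hθ))
  exact ⟨t₀, ht₀, fun t ht htt₀ => hsub ⟨ht, htt₀⟩⟩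

lemma abs_div_sub_div_le {K s s₀ : ℝ} (hK : 0 ≤ K) (hs : 1 ≤ s) (hs₀ : 1 ≤ s₀) :
    |K / s - K / s₀| ≤ K * |s - s₀| := by
  have hs0 : 0 < s := by linarith
  have hs₀0 : 0 < s₀ := by linarith
  have hss₀ : 1 ≤ s * s₀ := by nlinarith
  have hdiff : K / s - K / s₀ = K * (s₀ - s) / (s * s₀) := by field_simp
  rw [hdiff, abs_div, abs_mul, abs_of_nonneg hK, abs_of_pos (mul_pos hs0 hs₀0), abs_sub_comm]
  exact div_le_self (by positivity) hss₀

lemma mul_le_and_le_mul_of_abs_log_sub_le {a b δ : ℝ} (ha : 0 < a) (hb : 0 < b) (hδ : 0 < δ)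
    (h : |log a - log b| ≤ log (1 + δ)) : (1 - δ) * b ≤ a ∧ a ≤ (1 + δ) * b := by
  obtain ⟨hlo, hhi⟩ := abs_le.mp h
  have hδ' : 0 < 1 + δ := by linarith
  constructor
  · have hb' : b / (1 + δ) ≤ a := by
      rw [← log_le_log_iff (by positivity) ha, log_div hb.ne' hδ'.ne']
      linarith
    calc (1 - δ) * b ≤ b / (1 + δ) := by
          rw [le_div_iff₀ hδ']
          nlinarith [mul_pos hb (mul_pos hδ hδ)]
      _ ≤ a := hb'
  · rw [← log_le_log_iff ha (by positivity), log_mul hδ'.ne' hb.ne']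
    linarith

lemma rpow_div_bounds_of_abs_sub_le {K s s₀ η t ε δ : ℝ} (hK : 0 ≤ K) (hs : 1 ≤ s)
    (hs₀ : 1 ≤ s₀) (hδ : 0 < δ) (ht : 0 < t) (htε : t ≤ ε) (hε : ε < 1)
    (hη : |s - s₀| ≤ η) (hsmall : K * (η * log (1 / t)) ≤ log (1 + δ)) :
    (1 - δ) * ε ^ (K / s₀) ≤ ε ^ (K / s) ∧ ε ^ (K / s) ≤ (1 + δ) * ε ^ (K / s₀) := by
  have hε0 : 0 < ε := ht.trans_le htε
  apply mul_le_and_le_mul_of_abs_log_sub_le (by positivity) (by positivity) hδ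
  have hlog : |log ε| ≤ log (1 / t) := by
    rw [abs_of_neg (log_neg hε0 hε), one_div, log_inv, neg_le_neg_iff]
    exact log_le_log ht htε
  calc |log (ε ^ (K / s)) - log (ε ^ (K / s₀))| = |K / s - K / s₀| * |log ε| := by
        rw [log_rpow hε0, log_rpow hε0, ← sub_mul, abs_mul]
    _ ≤ (K * η) * log (1 / t) := by
        have hdiv : |K / s - K / s₀| ≤ K * η :=
          (abs_div_sub_div_le hK hs hs₀).trans (mul_le_mul_of_nonneg_left hη hK)
        exact mul_le_mul hdiv hlog (abs_nonneg _) ((abs_nonneg _).trans hdiv)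
    _ ≤ log (1 + δ) := by rw [mul_assoc]; exact hsmall

lemma exists_pos_forall_rpow_div_bounds {E : Type*} [NormedAddCommGroup E] [NormedSpace ℝ E]
    {q : E → ℝ} {ρ : ℝ → ℝ} (hρ : Modulus ρ) (hqρ : ∀ x, |q x - q 0| ≤ ρ ‖x‖)
    (hq : ∀ᶠ x in 𝓝 0, 1 ≤ q x) {K : ℝ} (hK : 0 ≤ K) {δ : ℝ} (hδ : 0 < δ) :
    ∃ ε₀ > 0, ∀ ε, 0 < ε → ε < ε₀ → ∀ y ∈ closedBall (0 : E) 1, 1 ≤ q (ε • y) ∧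
      (1 - δ) * ε ^ (K / q 0) ≤ ε ^ (K / q (ε • y)) ∧
      ε ^ (K / q (ε • y)) ≤ (1 + δ) * ε ^ (K / q 0) := by
  obtain ⟨r₁, hr₁, hq₁⟩ := Metric.eventually_nhds_iff_ball.mp hq
  obtain ⟨r₂, hr₂, hsmall⟩ := hρ.exists_pos_forall_mul_lt K (log_pos (by linarith : 1 < 1 + δ))
  refine ⟨min (min r₁ r₂) 1, by positivity, fun ε hε hεε₀ y hy => ?_⟩
  simp only [lt_min_iff] at hεε₀
  have hxε : ‖ε • y‖ ≤ ε := by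
    rw [norm_smul, Real.norm_of_nonneg hε.le]
    exact mul_le_of_le_one_right hε.le (mem_closedBall_zero_iff.mp hy)
  generalize ε • y = x at hxε ⊢
  have hq0 : 1 ≤ q 0 := hq₁ 0 (mem_ball_self hr₁)
  have hqx : 1 ≤ q x := hq₁ x (mem_ball_zero_iff.mpr (by linarith))
  refine ⟨hqx, ?_⟩
  rcases eq_or_ne x 0 with rfl | hx0
  · have hA : 0 < ε ^ (K / q 0) := by positivity
    constructor <;> nlinarith
  · have ht : 0 < ‖x‖ := norm_pos_iff.mpr hx0
    exact rpow_div_bounds_of_abs_sub_le hK hqx hq0 hδ ht hxε hεε₀.2 (hqρ x)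
      (hsmall _ ht (by linarith)).le

end Exponent

section Luxemburg

variable {N : ℕ} {m : Measure (EN N)} {U : Set (EN N)} {r : EN N → ℝ}

lemma luxNormM_nonneg (u : EN N → ℝ) : 0 ≤ luxNormM m U r u :=
  Real.sInf_nonneg fun _ hl => hl.1.le

lemma luxNormM_const_mul (u : EN N → ℝ) {a : ℝ} (ha : 0 < a) :
    luxNormM m U r (fun x => a * u x) = a * luxNormM m U r u := by
  have hset : {l : ℝ | 0 < l ∧ ∫ x in U, (|a * u x| / l) ^ r x ∂m ≤ 1}
      = a • {l : ℝ | 0 < l ∧ ∫ x in U, (|u x| / l) ^ r x ∂m ≤ 1} := by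
    ext l
    have hdiv : ∀ x, |a * u x| / l = |u x| / (a⁻¹ • l) := fun x => by
      rw [abs_mul, abs_of_pos ha, smul_eq_mul]
      field_simp
    simp only [Set.mem_smul_set_iff_inv_smul_mem₀ ha.ne', mem_ofPred_eq, hdiv, smul_eq_mul,
      mul_pos_iff_of_pos_left (inv_pos.mpr ha)]
  rw [luxNormM, luxNormM, hset, Real.sInf_smul_of_nonneg ha.le, smul_eq_mul]

lemma luxNormM_mono {v w : EN N → ℝ} (hU : MeasurableSet U) (hr : ∀ x ∈ U, 0 ≤ r x)
    (hvw : ∀ x ∈ U, |v x| ≤ |w x|)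
    (hv : ∀ l, 0 < l → IntegrableOn (fun x => (|v x| / l) ^ r x) U m)
    (hw : ∀ l, 0 < l → IntegrableOn (fun x => (|w x| / l) ^ r x) U m)
    (hadm : ∃ l, 0 < l ∧ ∫ x in U, (|w x| / l) ^ r x ∂m ≤ 1) :
    luxNormM m U r v ≤ luxNormM m U r w := by
  refine csInf_le_csInf ⟨0, fun l hl => hl.1.le⟩ hadm fun l ⟨hl, hint⟩ => ⟨hl, ?_⟩
  refine le_trans (setIntegral_mono_on (hv l hl) (hw l hl) hU fun x hx => ?_) hint
  exact rpow_le_rpow (by positivity) (div_le_div_of_nonneg_right (hvw x hx) hl.le) (hr x hx)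

lemma exists_pos_integral_le_one_of_abs_le {w : EN N → ℝ} {B : ℝ} (hU : m U ≠ ⊤)
    (hr : ∀ x ∈ U, 1 ≤ r x) (hB : ∀ x ∈ U, |w x| ≤ B) :
    ∃ l, 0 < l ∧ ∫ x in U, (|w x| / l) ^ r x ∂m ≤ 1 := by
  set l := (|B| + 1) * (m.real U + 1)
  have hU0 : 0 ≤ m.real U := measureReal_nonneg
  have hl : 0 < l := mul_pos (by positivity) (by linarith)
  refine ⟨l, hl, ?_⟩
  have hpt : ∀ x ∈ U, ‖(|w x| / l) ^ r x‖ ≤ |B| / l := fun x hx => by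
    have hwB : |w x| ≤ |B| := (hB x hx).trans (le_abs_self B)
    have hle1 : |w x| / l ≤ 1 := by
      rw [div_le_one hl]
      nlinarith [abs_nonneg B]
    rw [Real.norm_of_nonneg (by positivity)]
    exact (rpow_le_self_of_le_one (by positivity) hle1 (hr x hx)).trans (by gcongr)
  calc ∫ x in U, (|w x| / l) ^ r x ∂m ≤ |B| / l * m.real U :=
        (le_abs_self _).trans (norm_setIntegral_le_of_norm_le_const hU.lt_top hpt)
    _ ≤ 1 := by
        rw [div_mul_eq_mul_div, div_le_one hl]
        nlinarith [abs_nonneg B]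

lemma integrableOn_rpow_of_continuousOn [IsFiniteMeasureOnCompacts m] {K : Set (EN N)}
    {w : EN N → ℝ} (hK : IsCompact K) (hUK : U ⊆ K) (hr : ContinuousOn r K)
    (hr0 : ∀ x ∈ K, 0 < r x) (hw : ContinuousOn w K) :
    IntegrableOn (fun x => w x ^ r x) U m :=
  ((hw.rpow hr fun x hx => Or.inr (hr0 x hx)).integrableOn_compact hK).mono_set hUK

lemma luxNormM_ball_mono [IsFiniteMeasureOnCompacts m] {x₀ : EN N} {R : ℝ} {v w : EN N → ℝ}
    (hr : ContinuousOn r (closedBall x₀ R)) (hr1 : ∀ x ∈ closedBall x₀ R, 1 ≤ r x)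
    (hv : ContinuousOn v (closedBall x₀ R)) (hw : ContinuousOn w (closedBall x₀ R))
    (hvw : ∀ x ∈ ball x₀ R, |v x| ≤ |w x|) :
    luxNormM m (ball x₀ R) r v ≤ luxNormM m (ball x₀ R) r w := by
  have hr0 : ∀ x ∈ closedBall x₀ R, 0 < r x := fun x hx => one_pos.trans_le (hr1 x hx)
  have hint : ∀ f : EN N → ℝ, ContinuousOn f (closedBall x₀ R) → ∀ l, 0 < l →
      IntegrableOn (fun x => (|f x| / l) ^ r x) (ball x₀ R) m := fun f hf l _ =>
    integrableOn_rpow_of_continuousOn (isCompact_closedBall x₀ R) ball_subset_closedBall hr hr0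
      (hf.abs.div_const l)
  obtain ⟨B, hB⟩ := (isCompact_closedBall x₀ R).exists_bound_of_continuousOn hw
  refine luxNormM_mono measurableSet_ball (fun x hx => (hr0 x (ball_subset_closedBall hx)).le)
    hvw (hint v hv) (hint w hw) ?_
  exact exists_pos_integral_le_one_of_abs_le measure_ball_lt_top.ne
    (fun x hx => hr1 x (ball_subset_closedBall hx)) fun x hx => hB x (ball_subset_closedBall hx)

lemma mul_luxNormM_ball_le [IsFiniteMeasureOnCompacts m] {x₀ : EN N} {R : ℝ} {v w : EN N → ℝ}
    (hr : ContinuousOn r (closedBall x₀ R)) (hr1 : ∀ x ∈ closedBall x₀ R, 1 ≤ r x)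
    (hv : ContinuousOn v (closedBall x₀ R)) (hw : ContinuousOn w (closedBall x₀ R)) {a : ℝ}
    (haw : ∀ x ∈ ball x₀ R, a ≤ w x) :
    a * luxNormM m (ball x₀ R) r v ≤ luxNormM m (ball x₀ R) r (fun x => w x * v x) := by
  rcases le_or_gt a 0 with ha | ha
  · exact (mul_nonpos_of_nonpos_of_nonneg ha (luxNormM_nonneg v)).trans (luxNormM_nonneg _)
  rw [← luxNormM_const_mul v ha]
  refine luxNormM_ball_mono hr hr1 (continuousOn_const.mul hv) (hw.mul hv) fun x hx => ?_
  rw [abs_mul, abs_mul (w x)]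
  exact mul_le_mul_of_nonneg_right (abs_le_abs_of_nonneg ha.le (haw x hx)) (abs_nonneg _)

lemma luxNormM_ball_le_mul [IsFiniteMeasureOnCompacts m] {x₀ : EN N} {R : ℝ} {v w : EN N → ℝ}
    (hr : ContinuousOn r (closedBall x₀ R)) (hr1 : ∀ x ∈ closedBall x₀ R, 1 ≤ r x)
    (hv : ContinuousOn v (closedBall x₀ R)) (hw : ContinuousOn w (closedBall x₀ R)) {b : ℝ}
    (hb : 0 < b) (hwb : ∀ x ∈ ball x₀ R, |w x| ≤ b) :
    luxNormM m (ball x₀ R) r (fun x => w x * v x) ≤ b * luxNormM m (ball x₀ R) r v := by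
  rw [← luxNormM_const_mul v hb]
  refine luxNormM_ball_mono hr hr1 (hw.mul hv) (continuousOn_const.mul hv) fun x hx => ?_
  rw [abs_mul, abs_mul b, abs_of_pos hb]
  exact mul_le_mul_of_nonneg_right (hwb x hx) (abs_nonneg _)

/-- Rescaling `B_ε` to `B_1` multiplies the modular by `ε ^ N`, which is absorbed into the
function as the variable weight `ε ^ (N / r)`. -/
lemma luxNorm_ball_eq_dilate {ε : ℝ} (hε : 0 < ε) (u : EN N → ℝ)
    (hr : ∀ y ∈ ball (0 : EN N) 1, r (ε • y) ≠ 0) :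
    luxNorm (ball (0 : EN N) ε) r u = luxNorm (ball (0 : EN N) 1) (fun y => r (ε • y))
      (fun y => ε ^ ((N : ℝ) / r (ε • y)) * u (ε • y)) := by
  unfold luxNorm luxNormM
  congr 1
  ext l
  refine and_congr_right fun hl => ?_
  have hdil := Measure.setIntegral_comp_smul_of_pos (volume : Measure (EN N))
    (fun x => (|u x| / l) ^ r x) (ball (0 : EN N) 1) hε
  rw [smul_unitBall_of_pos hε, finrank_euclideanSpace_fin, smul_eq_mul,
    eq_inv_mul_iff_mul_eq₀ (pow_ne_zero _ hε.ne')] at hdil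
  rw [← hdil, ← integral_const_mul]
  refine iff_of_eq (congrArg (· ≤ (1 : ℝ)) ?_)
  refine setIntegral_congr_fun measurableSet_ball fun y hy => ?_
  rw [abs_mul, abs_of_pos (rpow_pos_of_pos hε _), mul_div_assoc,
    mul_rpow (rpow_nonneg hε.le _) (by positivity), ← rpow_mul hε.le, div_mul_cancel₀ _ (hr y hy),
    rpow_natCast]

end Luxemburg

theorem stmt9_general {N : ℕ}
    (p q : EN N → ℝ) (hqc : Continuous q)
    (c C : ℝ)
    (V : Set (EN N)) (hV : V ∈ 𝓝 (0 : EN N))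
    (hbV : ∀ x ∈ V, c ≤ p x ∧ p x ≤ C ∧ 1 ≤ q x ∧ q x ≤ C)
    (ρ : ℝ → ℝ) (hρ : Modulus ρ)
    (hqρ : ∀ x y : EN N, |q x - q y| ≤ ρ (dist x y))
    (hq₀ : q 0 = pstar N (p 0)) :
    ∀ δ : ℝ, 0 < δ → ∃ ε₀ : ℝ, 0 < ε₀ ∧ ∀ ε : ℝ, 0 < ε → ε < ε₀ →
      ∀ u : EN N → ℝ, TestFn (ball (0 : EN N) ε) u → u ≠ 0 →
        (1 - δ) * ε ^ ((N : ℝ) / pstar N (p 0)) *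
            luxNorm (ball (0 : EN N) 1) (fun x => q (ε • x)) (fun x => u (ε • x)) ≤
          luxNorm (ball (0 : EN N) ε) q u ∧
        luxNorm (ball (0 : EN N) ε) q u ≤
          (1 + δ) * ε ^ ((N : ℝ) / pstar N (p 0)) *
            luxNorm (ball (0 : EN N) 1) (fun x => q (ε • x)) (fun x => u (ε • x)) := by
  intro δ hδ
  have hq1 : ∀ᶠ x in 𝓝 (0 : EN N), 1 ≤ q x := mem_of_superset hV fun x hx => (hbV x hx).2.2.1
  obtain ⟨ε₀, hε₀, hbounds⟩ := exists_pos_forall_rpow_div_bounds hρ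
    (fun x => by simpa using hqρ x 0) hq1 (Nat.cast_nonneg N) hδ
  refine ⟨ε₀, hε₀, fun ε hε hεε₀ u hu _ => ?_⟩
  have hqε := hbounds ε hε hεε₀
  have hqcε : ContinuousOn (fun y => q (ε • y)) (closedBall 0 1) := by fun_prop
  have hucε : ContinuousOn (fun y => u (ε • y)) (closedBall 0 1) :=
    (hu.1.continuous.comp (continuous_const_smul ε)).continuousOn
  have hwcε : ContinuousOn (fun y => ε ^ ((N : ℝ) / q (ε • y))) (closedBall 0 1) :=
    continuousOn_const.rpow (continuousOn_const.div hqcε fun y hy => by linarith [(hqε y hy).1])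
      fun _ _ => Or.inl hε.ne'
  rw [← hq₀, luxNorm_ball_eq_dilate hε u fun y hy => by
    linarith [(hqε y (ball_subset_closedBall hy)).1]]
  refine ⟨mul_luxNormM_ball_le hqcε (fun y hy => (hqε y hy).1) hucε hwcε fun y hy =>
    (hqε y (ball_subset_closedBall hy)).2.1, ?_⟩
  refine luxNormM_ball_le_mul hqcε (fun y hy => (hqε y hy).1) hucε hwcε (by positivity)
    fun y hy => ?_
  rw [abs_of_pos (by positivity)]
  exact (hqε y (ball_subset_closedBall hy)).2.2

/-- uniform (in `u`) two-sided dilation estimate for the `L^{q(·)}` norm. -/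
theorem stmt9 {N : ℕ} (hN : 2 ≤ N) (Ω : Set (EN N)) (hΩo : IsOpen Ω)
    (hΩne : Ω.Nonempty) (hΩb : Bornology.IsBounded Ω)
    (p q : EN N → ℝ) (hpc : Continuous p) (hqc : Continuous q)
    (c C : ℝ) (hc : 1 < c)
    (V : Set (EN N)) (hV : V ∈ 𝓝 (0 : EN N))
    (hbV : ∀ x ∈ V, c ≤ p x ∧ p x ≤ C ∧ 1 ≤ q x ∧ q x ≤ C)
    (ρ : ℝ → ℝ) (hρ : Modulus ρ)
    (hpρ : ∀ x y : EN N, |p x - p y| ≤ ρ (dist x y))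
    (hqρ : ∀ x y : EN N, |q x - q y| ≤ ρ (dist x y))
    (h0 : (0 : EN N) ∈ Ω) (hp₀ : 1 < p 0) (hpN : p 0 < N)
    (hq₀ : q 0 = pstar N (p 0)) :
    ∀ δ : ℝ, 0 < δ → ∃ ε₀ : ℝ, 0 < ε₀ ∧ ∀ ε : ℝ, 0 < ε → ε < ε₀ →
      ∀ u : EN N → ℝ, TestFn (ball (0 : EN N) ε) u → u ≠ 0 →
        (1 - δ) * ε ^ ((N : ℝ) / pstar N (p 0)) *
            luxNorm (ball (0 : EN N) 1) (fun x => q (ε • x)) (fun x => u (ε • x)) ≤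
          luxNorm (ball (0 : EN N) ε) q u ∧
        luxNorm (ball (0 : EN N) ε) q u ≤
          (1 + δ) * ε ^ ((N : ℝ) / pstar N (p 0)) *
            luxNorm (ball (0 : EN N) 1) (fun x => q (ε • x)) (fun x => u (ε • x)) :=
  stmt9_general p q hqc c C V hV hbV ρ hρ hqρ hq₀
end
end

section
/- Let x₀ ∈ ℝ^N and R ≥ 1 with B_R(x₀) ⊆ Ω, write p_R^− := inf_{B_R(x₀)} p and p_R^+ := sup_{B_R(x₀)} p, and let u ∈ C_c^∞(B_1(0)) with |∇u| ≤ 1 on B_1(0). Define u_R(x) := u((x − x₀)/R). If R^{N − p_R^+}·∫_{B_1(0)} |∇u|^{p_R^+} dx > 1, then ‖|∇u_R|‖_{L^{p(·)}(B_R(x₀))} ≤ R^{(N − p_R^−)/p_R^−}·(∫_{B_1(0)} |∇u|^{p_R^−} dx)^{1/p_R^−}. -/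
open MeasureTheory Metric Set Filter Topology

noncomputable section

/-! Put `λ := R ^ ((N - p⁻) / p⁻) * (∫_{B_1} |∇u| ^ p⁻) ^ (1 / p⁻)`, so that
`(R λ) ^ p⁻ = R ^ N ∫_{B_1} |∇u| ^ p⁻ ≥ R ^ (N - p⁺) ∫_{B_1} |∇u| ^ p⁺ > 1`. Since `|∇u| ≤ 1`,
the base `|∇u_R(x)| / λ = |∇u|((x - x₀) / R) / (R λ)` lies in `[0, 1]`, so raising it to
`p(x) ≥ p⁻` only decreases it. The change of variables `y = (x - x₀) / R` then bounds the modular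
of `|∇u_R| / λ` on `B_R(x₀)` by `R ^ N (R λ) ^ (-p⁻) ∫_{B_1} |∇u| ^ p⁻ = 1`, so `λ` is admissible
in the infimum defining the Luxemburg norm. -/

theorem luxNormM_le {N : ℕ} {m : Measure (EN N)} {U : Set (EN N)} {r u : EN N → ℝ} {l : ℝ}
    (hl : 0 < l) (h : ∫ x in U, (|u x| / l) ^ r x ∂m ≤ 1) : luxNormM m U r u ≤ l :=
  csInf_le ⟨0, fun _ hl' => hl'.1.le⟩ ⟨hl, h⟩

theorem grad_comp_homothety {N : ℕ} (u : EN N → ℝ) (R : ℝ) (x₀ x : EN N) :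
    grad (fun x => u (R⁻¹ • (x - x₀))) x = |R|⁻¹ * grad u (R⁻¹ • (x - x₀)) := by
  rw [grad, fderiv_comp_sub (f := fun y => u (R⁻¹ • y)), fderiv_comp_smul, norm_smul,
    norm_inv, Real.norm_eq_abs, grad]

theorem grad_nonneg {N : ℕ} (v : EN N → ℝ) (x : EN N) : 0 ≤ grad v x :=
  norm_nonneg _

theorem continuous_grad {N : ℕ} {u : EN N → ℝ} (hu : ContDiff ℝ 1 u) : Continuous (grad u) :=
  (hu.continuous_fderiv one_ne_zero).norm

theorem Continuous.integrableOn_ball {X F : Type*} [MetricSpace X] [ProperSpace X]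
    [MeasurableSpace X] [BorelSpace X] [NormedAddCommGroup F] {μ : Measure X}
    [IsLocallyFiniteMeasure μ] {f : X → F} (hf : Continuous f) (x : X) (r : ℝ) :
    IntegrableOn f (ball x r) μ :=
  (hf.locallyIntegrable.integrableOn_isCompact (isCompact_closedBall x r)).mono_set
    ball_subset_closedBall

theorem setIntegral_rpow_le_of_le_one {α : Type*} [MeasurableSpace α] {μ : Measure α}
    {s : Set α} {f : α → ℝ} {q r : ℝ} (hf₀ : ∀ x ∈ s, 0 ≤ f x) (hf₁ : ∀ x ∈ s, f x ≤ 1)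
    (hq : 0 ≤ q) (hqr : q ≤ r) (hint : IntegrableOn (fun x => f x ^ q) s μ) :
    ∫ x in s, f x ^ r ∂μ ≤ ∫ x in s, f x ^ q ∂μ :=
  setIntegral_mono_of_nonneg (fun x hx => Real.rpow_nonneg (hf₀ x hx) r)
    (fun x hx => Real.rpow_le_rpow_of_exponent_ge' (hf₀ x hx) (hf₁ x hx) hq hqr) hint

theorem preimage_homothety_unitBall {E : Type*} [SeminormedAddCommGroup E] [NormedSpace ℝ E]
    (x₀ : E) {R : ℝ} (hR : 0 < R) :
    (fun x => R⁻¹ • (x - x₀)) ⁻¹' ball (0 : E) 1 = ball x₀ R := by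
  ext x
  rw [mem_preimage, mem_ball_zero_iff, norm_smul, norm_inv, Real.norm_of_nonneg hR.le,
    inv_mul_lt_iff₀ hR, mul_one, mem_ball, dist_eq_norm]

theorem setIntegral_ball_comp_homothety {E F : Type*} [NormedAddCommGroup E] [NormedSpace ℝ E]
    [FiniteDimensional ℝ E] [MeasurableSpace E] [BorelSpace E] [NormedAddCommGroup F]
    [NormedSpace ℝ F] (μ : Measure E) [μ.IsAddHaarMeasure] (f : E → F) (x₀ : E) {R : ℝ}
    (hR : 0 < R) :
    ∫ x in ball x₀ R, f (R⁻¹ • (x - x₀)) ∂μ =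
      R ^ Module.finrank ℝ E • ∫ y in ball (0 : E) 1, f y ∂μ := by
  have hind : (ball x₀ R).indicator (fun x => f (R⁻¹ • (x - x₀)))
      = fun x => (ball (0 : E) 1).indicator f (R⁻¹ • (x - x₀)) := by
    ext x
    rw [← preimage_homothety_unitBall x₀ hR]
    exact indicator_comp_right _
  rw [← integral_indicator measurableSet_ball, hind,
    integral_sub_right_eq_self (fun z => (ball (0 : E) 1).indicator f (R⁻¹ • z)) x₀,
    Measure.integral_comp_inv_smul_of_nonneg μ _ hR.le, integral_indicator measurableSet_ball]

theorem setIntegral_rpow_grad_homothety_le {N : ℕ} {u : EN N → ℝ} (hu : ContDiff ℝ 1 u)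
    {p : EN N → ℝ} {x₀ : EN N} {q R l : ℝ} (hq : 0 < q) (hR : 0 < R) (hl : 0 < l)
    (hqp : ∀ x ∈ ball x₀ R, q ≤ p x) (hgu : ∀ y ∈ ball (0 : EN N) 1, grad u y ≤ R * l) :
    ∫ x in ball x₀ R, (|grad (fun x => u (R⁻¹ • (x - x₀))) x| / l) ^ p x ≤
      R ^ N * ∫ y in ball (0 : EN N) 1, (grad u y / (R * l)) ^ q := by
  set F : EN N → ℝ := fun y => (grad u y / (R * l)) ^ q
  have hF : Continuous F :=
    ((continuous_grad hu).div_const _).rpow_const fun _ => Or.inr hq.le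
  have hbase : ∀ x, |grad (fun x => u (R⁻¹ • (x - x₀))) x| / l =
      grad u (R⁻¹ • (x - x₀)) / (R * l) := fun x => by
    rw [abs_of_nonneg (grad_nonneg _ _), grad_comp_homothety, abs_of_pos hR, inv_mul_eq_div,
      div_div]
  calc ∫ x in ball x₀ R, (|grad (fun x => u (R⁻¹ • (x - x₀))) x| / l) ^ p x
      ≤ ∫ x in ball x₀ R, F (R⁻¹ • (x - x₀)) := by
        refine setIntegral_mono_of_nonneg (fun x _ => by positivity) (fun x hx => ?_)
          ((hF.comp (by fun_prop)).integrableOn_ball x₀ R)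
        have hy : x ∈ (fun x => R⁻¹ • (x - x₀)) ⁻¹' ball (0 : EN N) 1 := by
          rwa [preimage_homothety_unitBall x₀ hR]
        rw [hbase]
        exact Real.rpow_le_rpow_of_exponent_ge' (div_nonneg (grad_nonneg _ _) (by positivity))
          ((div_le_one (by positivity)).2 (hgu _ hy)) hq.le (hqp x hx)
    _ = R ^ N * ∫ y in ball (0 : EN N) 1, F y := by
        rw [setIntegral_ball_comp_homothety volume F x₀ hR, finrank_euclideanSpace_fin,
          smul_eq_mul]

theorem luxNorm_grad_homothety_le {N : ℕ} {u : EN N → ℝ} (hu : ContDiff ℝ 1 u)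
    {p : EN N → ℝ} {x₀ : EN N} {q R : ℝ} (hq : 0 < q) (hR : 0 < R)
    (hqp : ∀ x ∈ ball x₀ R, q ≤ p x) (hI : 0 < ∫ y in ball (0 : EN N) 1, grad u y ^ q)
    (hgu : ∀ y ∈ ball (0 : EN N) 1,
      grad u y ^ q ≤ R ^ N * ∫ y in ball (0 : EN N) 1, grad u y ^ q) :
    luxNorm (ball x₀ R) p (grad (fun x => u (R⁻¹ • (x - x₀)))) ≤
      R ^ (((N : ℝ) - q) / q) * (∫ y in ball (0 : EN N) 1, grad u y ^ q) ^ (1 / q) := by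
  set I := ∫ y in ball (0 : EN N) 1, grad u y ^ q
  set l := R ^ (((N : ℝ) - q) / q) * I ^ (1 / q)
  have hl : 0 < l := by positivity
  have hRl : (R * l) ^ q = R ^ N * I := by
    rw [Real.mul_rpow hR.le hl.le, Real.mul_rpow (by positivity) (by positivity),
      ← Real.rpow_mul hR.le, ← Real.rpow_mul hI.le, div_mul_cancel₀ _ hq.ne',
      one_div_mul_cancel hq.ne', Real.rpow_one, ← mul_assoc, ← Real.rpow_add hR,
      add_sub_cancel, Real.rpow_natCast]
  have hgu' : ∀ y ∈ ball (0 : EN N) 1, grad u y ≤ R * l := fun y hy => by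
    rw [← Real.rpow_le_rpow_iff (grad_nonneg _ _) (by positivity) hq, hRl]
    exact hgu y hy
  refine luxNormM_le hl ?_
  calc ∫ x in ball x₀ R, (|grad (fun x => u (R⁻¹ • (x - x₀))) x| / l) ^ p x
      ≤ R ^ N * ∫ y in ball (0 : EN N) 1, (grad u y / (R * l)) ^ q :=
        setIntegral_rpow_grad_homothety_le hu hq hR hl hqp hgu'
    _ = R ^ N * (I / (R * l) ^ q) := by
        simp only [Real.div_rpow (grad_nonneg u _) (mul_pos hR hl).le, integral_div]
        rfl
    _ = 1 := by rw [hRl]; field_simp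

theorem stmt14_general {N : ℕ} (Ω : Set (EN N)) (p : EN N → ℝ)
    (c C : ℝ) (hc : 1 < c)
    (hpb : ∀ x ∈ Ω, c ≤ p x ∧ p x ≤ C)
    (x₀ : EN N) (R : ℝ) (hR : 1 ≤ R) (hball : ball x₀ R ⊆ Ω)
    (pm pp : ℝ)
    (hpm : pm = sInf (p '' ball x₀ R)) (hpp : pp = sSup (p '' ball x₀ R))
    (u : EN N → ℝ) (hu : TestFn (ball (0 : EN N) 1) u)
    (hgub : ∀ x ∈ ball (0 : EN N) 1, grad u x ≤ 1)
    (h1 : 1 < R ^ ((N : ℝ) - pp) * ∫ x in ball (0 : EN N) 1, grad u x ^ pp) :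
    luxNorm (ball x₀ R) p (grad (fun x => u (R⁻¹ • (x - x₀)))) ≤
      R ^ (((N : ℝ) - pm) / pm) *
        (∫ x in ball (0 : EN N) 1, grad u x ^ pm) ^ (1 / pm) := by
  have hR₀ : 0 < R := one_pos.trans_le hR
  have hu₁ : ContDiff ℝ 1 u := hu.1.of_le (by exact_mod_cast le_top)
  have hpm_le : ∀ x ∈ ball x₀ R, pm ≤ p x := fun x hx => hpm ▸
    csInf_le ⟨c, forall_mem_image.2 fun y hy => (hpb y (hball hy)).1⟩ (mem_image_of_mem p hx)
  have hle_pp : ∀ x ∈ ball x₀ R, p x ≤ pp := fun x hx => hpp ▸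
    le_csSup ⟨C, forall_mem_image.2 fun y hy => (hpb y (hball hy)).2⟩ (mem_image_of_mem p hx)
  have hx₀ : x₀ ∈ ball x₀ R := mem_ball_self hR₀
  have hc_pm : c ≤ pm := hpm ▸ le_csInf ⟨p x₀, mem_image_of_mem p hx₀⟩
    (forall_mem_image.2 fun y hy => (hpb y (hball hy)).1)
  have hpm₀ : 0 < pm := by linarith
  have hpm_pp : pm ≤ pp := (hpm_le x₀ hx₀).trans (hle_pp x₀ hx₀)
  have hint : IntegrableOn (fun y => grad u y ^ pm) (ball (0 : EN N) 1) :=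
    ((continuous_grad hu₁).rpow_const fun _ => Or.inr hpm₀.le).integrableOn_ball 0 1
  have hRI : 1 < R ^ N * ∫ y in ball (0 : EN N) 1, grad u y ^ pm :=
    calc 1 < R ^ ((N : ℝ) - pp) * ∫ y in ball (0 : EN N) 1, grad u y ^ pp := h1
      _ ≤ R ^ (N : ℝ) * ∫ y in ball (0 : EN N) 1, grad u y ^ pm := by
        refine mul_le_mul (Real.rpow_le_rpow_of_exponent_le hR (by linarith))
          (setIntegral_rpow_le_of_le_one (fun y _ => grad_nonneg u y) hgub hpm₀.le hpm_pp hint)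
          (setIntegral_nonneg measurableSet_ball fun y _ => ?_) (by positivity)
        exact Real.rpow_nonneg (grad_nonneg u y) pp
      _ = R ^ N * ∫ y in ball (0 : EN N) 1, grad u y ^ pm := by rw [Real.rpow_natCast]
  exact luxNorm_grad_homothety_le hu₁ hpm₀ hR₀ hpm_le
    (pos_of_mul_pos_right (one_pos.trans hRI) (by positivity))
    fun y hy => (Real.rpow_le_one (grad_nonneg u y) (hgub y hy) hpm₀.le).trans hRI.le

/-- upper bound for the variable exponent gradient norm of the rescaled
function `u_R`. -/
theorem stmt14 {N : ℕ} (hN : 2 ≤ N) (Ω : Set (EN N)) (hΩo : IsOpen Ω)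
    (hΩne : Ω.Nonempty) (hΩb : Bornology.IsBounded Ω)
    (p : EN N → ℝ) (hpc : Continuous p)
    (c C : ℝ) (hc : 1 < c)
    (hpb : ∀ x ∈ Ω, c ≤ p x ∧ p x ≤ C)
    (x₀ : EN N) (R : ℝ) (hR : 1 ≤ R) (hball : ball x₀ R ⊆ Ω)
    (pm pp : ℝ)
    (hpm : pm = sInf (p '' ball x₀ R)) (hpp : pp = sSup (p '' ball x₀ R))
    (u : EN N → ℝ) (hu : TestFn (ball (0 : EN N) 1) u)
    (hgub : ∀ x ∈ ball (0 : EN N) 1, grad u x ≤ 1)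
    (h1 : 1 < R ^ ((N : ℝ) - pp) * ∫ x in ball (0 : EN N) 1, grad u x ^ pp) :
    luxNorm (ball x₀ R) p (grad (fun x => u (R⁻¹ • (x - x₀)))) ≤
      R ^ (((N : ℝ) - pm) / pm) *
        (∫ x in ball (0 : EN N) 1, grad u x ^ pm) ^ (1 / pm) :=
  stmt14_general Ω p c C hc hpb x₀ R hR hball pm pp hpm hpp u hu hgub h1
end
end
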